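/- If X is a strongly star-Lindelöf topological space and Y is a subset of X of cardinality less than 𝔡, then Y is strongly star-Scheepers in X; that is, for each sequence (U_n) of open covers of X there exists a sequence (F_n) of finite subsets of X such that for each finite set F ⊆ Y there exists n with F ⊆ St(F_n, U_n). -/

import Mathlib

open Set

/-- The dominating number 𝔡: least cardinality of a dominating family in ℕ^ℕ. -/
noncomputable def dominatingNumber : Cardinal :=
  sInf { c | ∃ D : Set (ℕ → ℕ),
    (∀ g : ℕ → ℕ, ∃ f ∈ D, ∀ᶠ n in Filter.atTop, g n ≤ f n) ∧ c = Cardinal.mk D }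

/-- `U` is an open cover of the space `X`. -/
def IsOpenCover {X : Type u} [TopologicalSpace X] (U : Set (Set X)) : Prop :=
  (∀ u ∈ U, IsOpen u) ∧ ⋃₀ U = Set.univ

/-- The star of a set `A` with respect to a family `U`. -/
def starOf {X : Type*} (A : Set X) (U : Set (Set X)) : Set X :=
  ⋃₀ {B | B ∈ U ∧ (A ∩ B).Nonempty}

/-- The star-Scheepers property (ω-cover form). -/
def StarScheepers (X : Type*) [TopologicalSpace X] : Prop :=
  ∀ U : ℕ → Set (Set X), (∀ n, IsOpenCover (U n)) →
    ∃ V : ℕ → Set (Set X), (∀ n, V n ⊆ U n ∧ (V n).Finite) ∧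
      ∀ F : Set X, F.Finite → ∃ n, F ⊆ starOf (⋃₀ V n) (U n)

/-- The strongly star-Scheepers property. -/
def StronglyStarScheepers (X : Type*) [TopologicalSpace X] : Prop :=
  ∀ U : ℕ → Set (Set X), (∀ n, IsOpenCover (U n)) →
    ∃ F : ℕ → Set X, (∀ n, (F n).Finite) ∧
      ∀ G : Set X, G.Finite → ∃ n, G ⊆ starOf (F n) (U n)

universe u

/-!
For each `n` pick a countable `A n` whose star is `X` and enumerate it injectively in `ℕ`.
A point `y ∈ Y` lies in the star of a single point of `A n`; call its index `b y n`.
The functions `n ↦ max_{y ∈ S} b y n`, for finite `S ⊆ Y`, are fewer than `𝔡`, so some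
`g : ℕ → ℕ` is not dominated by any of them. Then `F n`, the points of `A n` with index below
`g n`, work: for each finite `S` there is an `n` with `b y n < g n` for all `y ∈ S`.
-/

open Filter Cardinal

def IsDominating (D : Set (ℕ → ℕ)) : Prop :=
  ∀ g : ℕ → ℕ, ∃ f ∈ D, ∀ᶠ n in atTop, g n ≤ f n

lemma dominatingNumber_le_mk {D : Set (ℕ → ℕ)} (hD : IsDominating D) :
    dominatingNumber ≤ #D :=
  csInf_le' ⟨D, hD, rfl⟩

lemma exists_isDominating_mk_eq :
    ∃ D : Set (ℕ → ℕ), IsDominating D ∧ dominatingNumber = #D :=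
  csInf_mem (s := {c | ∃ D : Set (ℕ → ℕ), IsDominating D ∧ c = #D})
    ⟨#(univ : Set (ℕ → ℕ)), univ,
      fun g => ⟨g, mem_univ g, Eventually.of_forall fun _ => le_rfl⟩, rfl⟩

lemma exists_eventually_gt_of_seq (h : ℕ → ℕ → ℕ) :
    ∃ g : ℕ → ℕ, ∀ i, ∀ᶠ n in atTop, h i n < g n := by
  refine ⟨fun n => (Finset.range (n + 1)).sup (h · n) + 1, fun i => ?_⟩
  filter_upwards [eventually_ge_atTop i] with n hin
  exact Nat.lt_succ_of_le (Finset.le_sup (f := (h · n)) (Finset.mem_range_succ_iff.mpr hin))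

lemma IsDominating.aleph0_lt_mk {D : Set (ℕ → ℕ)} (hD : IsDominating D) : ℵ₀ < #D := by
  by_contra! hle
  obtain ⟨f₀, hf₀, -⟩ := hD 0
  have hD_countable : D.Countable := countable_coe_iff.mp (mk_le_aleph0_iff.mp hle)
  obtain ⟨h, rfl⟩ := hD_countable.exists_eq_range ⟨f₀, hf₀⟩
  obtain ⟨g, hg⟩ := exists_eventually_gt_of_seq h
  obtain ⟨_, ⟨i, rfl⟩, hgi⟩ := hD g
  obtain ⟨n, hle, hlt⟩ := (hgi.and (hg i)).exists
  exact hle.not_gt hlt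

lemma aleph0_lt_dominatingNumber : ℵ₀ < dominatingNumber := by
  obtain ⟨D, hD, hDeq⟩ := exists_isDominating_mk_eq
  exact hDeq ▸ hD.aleph0_lt_mk

lemma exists_frequently_gt_of_lift_mk_lt {ι : Type u} (f : ι → ℕ → ℕ)
    (h : lift.{0} #ι < lift.{u} dominatingNumber) :
    ∃ g : ℕ → ℕ, ∀ i, ∃ᶠ n in atTop, f i n < g n := by
  by_contra! hcon
  have hdom : IsDominating (range f) := fun g => by
    obtain ⟨i, hi⟩ := hcon g
    exact ⟨f i, mem_range_self i, hi⟩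
  have hle : lift.{u} dominatingNumber ≤ lift.{0} #ι :=
    (lift_le.mpr (dominatingNumber_le_mk hdom)).trans mk_range_le_lift
  exact hle.not_gt h

lemma mk_finset_le_max (α : Type*) : #(Finset α) ≤ max ℵ₀ #α := by
  rcases finite_or_infinite α with hα | hα
  · exact (mk_le_aleph0 (α := Finset α)).trans (le_max_left _ _)
  · exact (mk_finset_of_infinite α).le.trans (le_max_right _ _)

lemma lift_mk_finset_lt_of_lift_mk_lt {ι : Type u}
    (h : lift.{0} #ι < lift.{u} dominatingNumber) :
    lift.{0} #(Finset ι) < lift.{u} dominatingNumber := by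
  refine (lift_le.mpr (mk_finset_le_max ι)).trans_lt ?_
  rw [lift_max, lift_aleph0]
  exact max_lt (lift_aleph0.{u, 0} ▸ lift_lt.mpr aleph0_lt_dominatingNumber) h

lemma exists_bound_of_finite_of_lift_mk_lt {ι : Type u} (b : ι → ℕ → ℕ)
    (h : lift.{0} #ι < lift.{u} dominatingNumber) :
    ∃ g : ℕ → ℕ, ∀ S : Set ι, S.Finite → ∃ n, ∀ i ∈ S, b i n < g n := by
  obtain ⟨g, hg⟩ := exists_frequently_gt_of_lift_mk_lt
    (fun (S : Finset ι) n => S.sup (b · n)) (lift_mk_finset_lt_of_lift_mk_lt h)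
  refine ⟨g, fun S hS => ?_⟩
  obtain ⟨n, hn⟩ := (hg hS.toFinset).exists
  exact ⟨n, fun i hi =>
    (Finset.le_sup (f := (b · n)) (hS.mem_toFinset.mpr hi)).trans_lt hn⟩

lemma starOf_mono {X : Type*} {A A' : Set X} (h : A ⊆ A') (U : Set (Set X)) :
    starOf A U ⊆ starOf A' U := by
  rintro x ⟨B, ⟨hBU, z, hzA, hzB⟩, hxB⟩
  exact ⟨B, ⟨hBU, z, h hzA, hzB⟩, hxB⟩

lemma exists_mem_starOf_singleton {X : Type*} {A : Set X} {U : Set (Set X)} {x : X}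
    (hx : x ∈ starOf A U) : ∃ a ∈ A, x ∈ starOf {a} U := by
  obtain ⟨B, ⟨hBU, a, haA, haB⟩, hxB⟩ := hx
  exact ⟨a, haA, B, ⟨hBU, a, rfl, haB⟩, hxB⟩

theorem exists_finite_subset_starOf_of_countable {X : Type u} (Y : Set X)
    (hY : lift.{0} #Y < lift.{u} dominatingNumber) (U : ℕ → Set (Set X)) (A : ℕ → Set X)
    (hA : ∀ n, (A n).Countable) (hYA : ∀ n, Y ⊆ starOf (A n) (U n)) :
    ∃ F : ℕ → Set X, (∀ n, (F n).Finite) ∧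
      ∀ G : Set X, G ⊆ Y → G.Finite → ∃ n, G ⊆ starOf (F n) (U n) := by
  choose e he using fun n => countable_iff_exists_injOn.mp (hA n)
  choose a haA hya using fun (y : Y) n => exists_mem_starOf_singleton (hYA n y.2)
  obtain ⟨g, hg⟩ := exists_bound_of_finite_of_lift_mk_lt (fun y n => e n (a y n)) hY
  refine ⟨fun n => {x ∈ A n | e n x < g n}, fun n => ?_, fun G hGY hG => ?_⟩
  · refine Finite.of_finite_image ?_ ((he n).mono (sep_subset _ _))
    exact (finite_Iio (g n)).subset (image_subset_iff.mpr fun _ hx => hx.2)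
  · obtain ⟨n, hn⟩ := hg _ (hG.preimage Subtype.val_injective.injOn)
    refine ⟨n, fun x hx => ?_⟩
    have hxY : x ∈ Y := hGY hx
    have haF : a ⟨x, hxY⟩ n ∈ {z ∈ A n | e n z < g n} := ⟨haA _ n, hn ⟨x, hxY⟩ hx⟩
    exact starOf_mono (singleton_subset_iff.mpr haF) _ (hya ⟨x, hxY⟩ n)

theorem stmt_1 {X : Type u} [TopologicalSpace X]
    (hSSL : ∀ U : Set (Set X), IsOpenCover U →
      ∃ A : Set X, A.Countable ∧ starOf A U = Set.univ)
    (Y : Set X) (hY : Cardinal.lift.{0} (Cardinal.mk Y) < Cardinal.lift.{u} dominatingNumber) :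
    ∀ U : ℕ → Set (Set X), (∀ n, IsOpenCover (U n)) →
      ∃ F : ℕ → Set X, (∀ n, (F n).Finite) ∧
        ∀ G : Set X, G ⊆ Y → G.Finite → ∃ n, G ⊆ starOf (F n) (U n) := by
  intro U hU
  choose A hA hAU using fun n => hSSL (U n) (hU n)
  exact exists_finite_subset_starOf_of_countable Y hY U A hA fun n => (hAU n) ▸ subset_univ Y
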